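/- Let X₀, M be Hilbert spaces, a : X₀ × X₀ → ℝ and a_h-type forms bounded bilinear, b : X₀ × M → ℝ bounded bilinear with constant C_b, and suppose b satisfies the discrete inf-sup condition on subspaces X_{0,h} ⊆ X₀, M_h ⊆ M with constant c_b > 0. Suppose (u, p) and (u_h, p_h) satisfy a_ρ(u, w_h) + b(w_h, p) = l(w_h) and a_{ρ_h}(u_h, w_h) + b(w_h, p_h) = l(w_h) for all w_h ∈ X_{0,h}, where a_ρ(u,v) = ∫ α(ρ)u·v + ν∇u:∇v, with 0 ≤ α(·) ≤ ᾱ and α Lipschitz with constant L_α. Then for all q_h ∈ M_h: c_b ‖q_h − p_h‖_M ≤ ‖(α(ρ) − α(ρ_h)) u‖_{L²} + (ᾱ + ν)‖u − u_h‖_{H¹} + C_b ‖p − q_h‖_M, and hence ‖p − p_h‖_M ≤ C(‖(α(ρ) − α(ρ_h))u‖_{L²} + ‖u − u_h‖_{H¹} + inf_{q_h ∈ M_h}‖p − q_h‖_M) with C depending only on c_b, C_b, ᾱ, ν. -/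

import Mathlib

/-!
The Galerkin identities for `(u, p)` and `(u_h, p_h)`, tested with the same `w_h ∈ X_{0,h}`,
give `b(w_h, q_h − p_h) = b(w_h, q_h − p) + a_{ρ_h}(u_h, w_h) − a_ρ(u, w_h)`. Splitting
`a_ρ(u, ·) − a_{ρ_h}(u_h, ·)` into the coefficient error `(α(ρ) − α(ρ_h)) u` plus
`a_{ρ_h}(u − u_h, ·)` and using the continuity of `a_{ρ_h}` and `b`, the right-hand side is at
most `(‖(α(ρ) − α(ρ_h)) u‖ + (ᾱ + ν)‖u − u_h‖ + C_b ‖p − q_h‖) ‖w_h‖`, so the discrete inf-sup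
condition bounds `c_b ‖q_h − p_h‖`. The triangle inequality through `q_h` then bounds
`‖p − p_h‖`.
-/

open scoped RealInnerProductSpace

theorem le_of_forall_lt_exists_mul_norm_le {E : Type*} [NormedAddCommGroup E] {s : Set E}
    {f : E → ℝ} {β R : ℝ} (hβ : ∀ c < β, ∃ v ∈ s, v ≠ 0 ∧ c * ‖v‖ ≤ f v)
    (hR : ∀ v ∈ s, f v ≤ R * ‖v‖) : β ≤ R := by
  refine le_of_forall_lt_imp_le_of_dense fun c hc => ?_
  obtain ⟨v, hv, hv0, hcv⟩ := hβ c hc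
  exact le_of_mul_le_mul_right (hcv.trans (hR v hv)) (norm_pos_iff.mpr hv0)

section BrinkmanForm

variable {X L W : Type*} [NormedAddCommGroup X] [NormedSpace ℝ X]
  [NormedAddCommGroup L] [InnerProductSpace ℝ L] [NormedAddCommGroup W] [InnerProductSpace ℝ W]

/-- The form `a_ρ(v, w) = ∫ α(ρ) v · w + ν ∇v : ∇w`, with `m` multiplication by `α(ρ)`,
`ι` the embedding into `L²` and `G` the gradient. -/
def brinkmanForm (m : L →L[ℝ] L) (ι : X →L[ℝ] L) (G : X →L[ℝ] W) (ν : ℝ) (v w : X) : ℝ :=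
  ⟪m (ι v), ι w⟫ + ν * ⟪G v, G w⟫

theorem brinkmanForm_sub_brinkmanForm (m m' : L →L[ℝ] L) (ι : X →L[ℝ] L) (G : X →L[ℝ] W)
    (ν : ℝ) (v v' w : X) :
    brinkmanForm m ι G ν v w - brinkmanForm m' ι G ν v' w =
      ⟪(m - m') (ι v), ι w⟫ + brinkmanForm m' ι G ν (v - v') w := by
  simp only [brinkmanForm, map_sub, sub_apply, inner_sub_left]
  ring

theorem abs_brinkmanForm_le {m : L →L[ℝ] L} {ι : X →L[ℝ] L} {G : X →L[ℝ] W} {αbar ν : ℝ}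
    (hαbar : 0 ≤ αbar) (hν : 0 ≤ ν) (hm : ∀ z, ‖m z‖ ≤ αbar * ‖z‖) (hι : ∀ v, ‖ι v‖ ≤ ‖v‖)
    (hG : ∀ v, ‖G v‖ ≤ ‖v‖) (v w : X) :
    |brinkmanForm m ι G ν v w| ≤ (αbar + ν) * ‖v‖ * ‖w‖ := by
  have hmass : |⟪m (ι v), ι w⟫| ≤ αbar * ‖v‖ * ‖w‖ :=
    calc |⟪m (ι v), ι w⟫| ≤ ‖m (ι v)‖ * ‖ι w‖ := abs_real_inner_le_norm _ _
      _ ≤ (αbar * ‖v‖) * ‖w‖ := by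
        gcongr
        · exact (hm _).trans (by gcongr; exact hι v)
        · exact hι w
  have hvisc : |⟪G v, G w⟫| ≤ ‖v‖ * ‖w‖ :=
    (abs_real_inner_le_norm _ _).trans (mul_le_mul (hG v) (hG w) (norm_nonneg _) (norm_nonneg _))
  calc |brinkmanForm m ι G ν v w| ≤ |⟪m (ι v), ι w⟫| + ν * |⟪G v, G w⟫| := by
        refine (abs_add_le _ _).trans_eq ?_
        rw [abs_mul, abs_of_nonneg hν]
    _ ≤ αbar * ‖v‖ * ‖w‖ + ν * (‖v‖ * ‖w‖) := by gcongr
    _ = (αbar + ν) * ‖v‖ * ‖w‖ := by ring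

theorem abs_brinkmanForm_sub_brinkmanForm_le {m m' : L →L[ℝ] L} {ι : X →L[ℝ] L} {G : X →L[ℝ] W}
    {αbar ν : ℝ} (hαbar : 0 ≤ αbar) (hν : 0 ≤ ν) (hm' : ∀ z, ‖m' z‖ ≤ αbar * ‖z‖)
    (hι : ∀ v, ‖ι v‖ ≤ ‖v‖) (hG : ∀ v, ‖G v‖ ≤ ‖v‖) (v v' w : X) :
    |brinkmanForm m ι G ν v w - brinkmanForm m' ι G ν v' w| ≤
      (‖(m - m') (ι v)‖ + (αbar + ν) * ‖v - v'‖) * ‖w‖ := by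
  rw [brinkmanForm_sub_brinkmanForm]
  have hcoeff : |⟪(m - m') (ι v), ι w⟫| ≤ ‖(m - m') (ι v)‖ * ‖w‖ :=
    (abs_real_inner_le_norm _ _).trans (by gcongr; exact hι w)
  have hform := abs_brinkmanForm_le hαbar hν hm' hι hG (v - v') w
  calc _ ≤ _ := abs_add_le _ _
    _ ≤ _ := add_le_add hcoeff hform
    _ = _ := by ring

end BrinkmanForm

theorem mul_norm_sub_le_of_galerkin_of_infSup {X M L W : Type*}
    [NormedAddCommGroup X] [NormedSpace ℝ X] [NormedAddCommGroup M] [NormedSpace ℝ M]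
    [NormedAddCommGroup L] [InnerProductSpace ℝ L] [NormedAddCommGroup W] [InnerProductSpace ℝ W]
    {Xh : Submodule ℝ X} {Mh : Submodule ℝ M} {ι : X →L[ℝ] L} {G : X →L[ℝ] W}
    {m mh : L →L[ℝ] L} {αbar ν cb Cb : ℝ} (hαbar : 0 ≤ αbar) (hν : 0 ≤ ν)
    (hmh : ∀ z, ‖mh z‖ ≤ αbar * ‖z‖) (hι : ∀ v, ‖ι v‖ ≤ ‖v‖) (hG : ∀ v, ‖G v‖ ≤ ‖v‖)
    {b : X →L[ℝ] M →L[ℝ] ℝ} (hb : ∀ v q, |b v q| ≤ Cb * ‖v‖ * ‖q‖)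
    (hinfsup : ∀ qh ∈ Mh, ∀ c < cb * ‖qh‖, ∃ vh ∈ Xh, vh ≠ 0 ∧ c * ‖vh‖ ≤ b vh qh)
    {l : X →L[ℝ] ℝ} {u uh : X} {p ph qh : M} (hph : ph ∈ Mh) (hqh : qh ∈ Mh)
    (hGalerkin : ∀ wh ∈ Xh, brinkmanForm m ι G ν u wh + b wh p = l wh)
    (hGalerkinh : ∀ wh ∈ Xh, brinkmanForm mh ι G ν uh wh + b wh ph = l wh) :
    cb * ‖qh - ph‖ ≤ ‖(m - mh) (ι u)‖ + (αbar + ν) * ‖u - uh‖ + Cb * ‖p - qh‖ := by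
  refine le_of_forall_lt_exists_mul_norm_le (hinfsup _ (Mh.sub_mem hqh hph)) fun wh hwh => ?_
  have horth : b wh (qh - ph) = b wh (qh - p) +
      (brinkmanForm mh ι G ν uh wh - brinkmanForm m ι G ν u wh) := by
    have := hGalerkin wh hwh
    have := hGalerkinh wh hwh
    simp only [map_sub]
    linarith
  have hbq : b wh (qh - p) ≤ Cb * ‖p - qh‖ * ‖wh‖ :=
    calc b wh (qh - p) ≤ Cb * ‖wh‖ * ‖qh - p‖ := (le_abs_self _).trans (hb _ _)
      _ = Cb * ‖p - qh‖ * ‖wh‖ := by rw [norm_sub_rev]; ring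
  have ha := abs_brinkmanForm_sub_brinkmanForm_le (m := m) hαbar hν hmh hι hG u uh wh
  rw [abs_sub_comm] at ha
  rw [horth]
  linarith [le_abs_self (brinkmanForm mh ι G ν uh wh - brinkmanForm m ι G ν u wh)]

theorem le_max_mul_of_le_add_of_mul_le {cb A B e d P s t : ℝ} (hcb : 0 < cb)
    (he : 0 ≤ e) (hd : 0 ≤ d) (hP : 0 ≤ P) (hs : cb * s ≤ e + A * d + B * P)
    (ht : t ≤ P + s) :
    t ≤ max (max (A / cb) (1 / cb)) (1 + B / cb) * (e + d + P) := by
  set C := max (max (A / cb) (1 / cb)) (1 + B / cb)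
  have hs' : s ≤ 1 / cb * e + A / cb * d + (B / cb) * P := by
    rw [← le_div_iff₀' hcb] at hs
    exact hs.trans_eq (by ring)
  calc t ≤ 1 / cb * e + A / cb * d + (1 + B / cb) * P := by linarith
    _ ≤ C * e + C * d + C * P := by
      gcongr
      · exact (le_max_right _ _).trans (le_max_left _ _)
      · exact (le_max_left _ _).trans (le_max_left _ _)
      · exact le_max_right _ _
    _ = C * (e + d + P) := by ring

theorem stmt19_general {X₀ M L W : Type*}
    [NormedAddCommGroup X₀] [InnerProductSpace ℝ X₀]
    [NormedAddCommGroup M] [InnerProductSpace ℝ M]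
    [NormedAddCommGroup L] [InnerProductSpace ℝ L]
    [NormedAddCommGroup W] [InnerProductSpace ℝ W]
    (X0h : Submodule ℝ X₀) (Mh : Submodule ℝ M)
    (ι : X₀ →L[ℝ] L) (G : X₀ →L[ℝ] W)
    (hι : ∀ v : X₀, ‖ι v‖ ≤ ‖v‖) (hG : ∀ v : X₀, ‖G v‖ ≤ ‖v‖)
    (mρ mρh : L →L[ℝ] L) (αbar ν cb Cb : ℝ)
    (hαbar : 0 ≤ αbar) (hν : 0 ≤ ν) (hcb : 0 < cb)
    (hmρh : ∀ z : L, ‖mρh z‖ ≤ αbar * ‖z‖)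
    (b : X₀ →L[ℝ] M →L[ℝ] ℝ)
    (hb : ∀ (v : X₀) (q : M), |b v q| ≤ Cb * ‖v‖ * ‖q‖)
    (hinfsup : ∀ qh ∈ Mh, ∀ c : ℝ, c < cb * ‖qh‖ →
      ∃ vh ∈ X0h, vh ≠ 0 ∧ c * ‖vh‖ ≤ b vh qh)
    (l : X₀ →L[ℝ] ℝ) (u uh : X₀) (p ph : M) (hph : ph ∈ Mh)
    (hGalerkin : ∀ wh ∈ X0h,
      (⟪mρ (ι u), ι wh⟫ + ν * ⟪G u, G wh⟫) + b wh p = l wh)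
    (hGalerkinh : ∀ wh ∈ X0h,
      (⟪mρh (ι uh), ι wh⟫ + ν * ⟪G uh, G wh⟫) + b wh ph = l wh) :
    (∀ qh ∈ Mh, cb * ‖qh - ph‖ ≤
      ‖(mρ - mρh) (ι u)‖ + (αbar + ν) * ‖u - uh‖ + Cb * ‖p - qh‖) ∧
    ∃ C : ℝ, 0 < C ∧ C = max (max ((αbar + ν) / cb) (1 / cb)) (1 + Cb / cb) ∧
      ∀ qh ∈ Mh, ‖p - ph‖ ≤
        C * (‖(mρ - mρh) (ι u)‖ + ‖u - uh‖ + ‖p - qh‖) := by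
  have hpressure : ∀ qh ∈ Mh, cb * ‖qh - ph‖ ≤
      ‖(mρ - mρh) (ι u)‖ + (αbar + ν) * ‖u - uh‖ + Cb * ‖p - qh‖ := fun qh hqh =>
    mul_norm_sub_le_of_galerkin_of_infSup hαbar hν hmρh hι hG hb hinfsup hph hqh
      hGalerkin hGalerkinh
  refine ⟨hpressure, _, ?_, rfl, fun qh hqh => ?_⟩
  · exact (one_div_pos.mpr hcb).trans_le ((le_max_right _ _).trans (le_max_left _ _))
  · exact le_max_mul_of_le_add_of_mul_le hcb (norm_nonneg _) (norm_nonneg _) (norm_nonneg _)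
      (hpressure qh hqh) (norm_sub_le_norm_sub_add_norm_sub p qh ph)

/-- Pressure error estimate via the discrete inf-sup condition. Abstractly: `X₀` plays the
role of `H¹₀(Ω)^d`, `L` of `L²(Ω)^d` (with embedding `ι`, `‖ι v‖ ≤ ‖v‖`), `W` of the space
of gradients (with gradient map `G`, `‖G v‖ ≤ ‖v‖`), `mρ`/`mρh` of multiplication by
`α(ρ)`/`α(ρ_h)` (with `‖mρh z‖ ≤ ᾱ ‖z‖`), and the forms are
`a_ρ(v,w) = ⟪mρ(ιv), ιw⟫ + ν⟪Gv, Gw⟫`, `b` bounded bilinear with constant `C_b`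
satisfying the discrete inf-sup condition with constant `c_b` on `X_{0,h} × M_h`.
If `(u, p)` and `(u_h, p_h)` satisfy the corresponding Galerkin identities against all
`w_h ∈ X_{0,h}`, then for every `q_h ∈ M_h`,
`c_b ‖q_h − p_h‖ ≤ ‖(mρ − mρh)(ιu)‖ + (ᾱ + ν)‖u − u_h‖ + C_b ‖p − q_h‖`,
and consequently
`‖p − p_h‖ ≤ C (‖(mρ − mρh)(ιu)‖ + ‖u − u_h‖ + ‖p − q_h‖)`
with `C` depending only on `c_b, C_b, ᾱ, ν`. -/
theorem stmt19 {X₀ M L W : Type*}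
    [NormedAddCommGroup X₀] [InnerProductSpace ℝ X₀] [CompleteSpace X₀]
    [NormedAddCommGroup M] [InnerProductSpace ℝ M] [CompleteSpace M]
    [NormedAddCommGroup L] [InnerProductSpace ℝ L] [CompleteSpace L]
    [NormedAddCommGroup W] [InnerProductSpace ℝ W] [CompleteSpace W]
    (X0h : Submodule ℝ X₀) (Mh : Submodule ℝ M)
    (ι : X₀ →L[ℝ] L) (G : X₀ →L[ℝ] W)
    (hι : ∀ v : X₀, ‖ι v‖ ≤ ‖v‖) (hG : ∀ v : X₀, ‖G v‖ ≤ ‖v‖)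
    (mρ mρh : L →L[ℝ] L) (αbar ν cb Cb : ℝ)
    (hαbar : 0 ≤ αbar) (hν : 0 ≤ ν) (hcb : 0 < cb) (hCb : 0 ≤ Cb)
    (hmρh : ∀ z : L, ‖mρh z‖ ≤ αbar * ‖z‖)
    (b : X₀ →L[ℝ] M →L[ℝ] ℝ)
    (hb : ∀ (v : X₀) (q : M), |b v q| ≤ Cb * ‖v‖ * ‖q‖)
    (hinfsup : ∀ qh ∈ Mh, ∀ c : ℝ, c < cb * ‖qh‖ →
      ∃ vh ∈ X0h, vh ≠ 0 ∧ c * ‖vh‖ ≤ b vh qh)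
    (l : X₀ →L[ℝ] ℝ) (u uh : X₀) (p ph : M) (hph : ph ∈ Mh)
    (hGalerkin : ∀ wh ∈ X0h,
      (⟪mρ (ι u), ι wh⟫ + ν * ⟪G u, G wh⟫) + b wh p = l wh)
    (hGalerkinh : ∀ wh ∈ X0h,
      (⟪mρh (ι uh), ι wh⟫ + ν * ⟪G uh, G wh⟫) + b wh ph = l wh) :
    (∀ qh ∈ Mh, cb * ‖qh - ph‖ ≤
      ‖(mρ - mρh) (ι u)‖ + (αbar + ν) * ‖u - uh‖ + Cb * ‖p - qh‖) ∧
    ∃ C : ℝ, 0 < C ∧ C = max (max ((αbar + ν) / cb) (1 / cb)) (1 + Cb / cb) ∧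
      ∀ qh ∈ Mh, ‖p - ph‖ ≤
        C * (‖(mρ - mρh) (ι u)‖ + ‖u - uh‖ + ‖p - qh‖) :=
  stmt19_general X0h Mh ι G hι hG mρ mρh αbar ν cb Cb hαbar hν hcb hmρh b hb hinfsup l u uh p ph hph
    hGalerkin hGalerkinh
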